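/- arXiv:2408.04490 — 3 statements merged into one kernel-verified Lean document; each statement's English description precedes it below -/
import Mathlib

section
/- (Correctness of SEBQ.) Let (Q,*) be a quasigroup with Q = F_2^k and parastrophe \, let R = (r_1,…,r_n) ∈ Q^n be an initial vector and let M = (m_1,…,m_l) ∈ Q^l be any message. If C = (c_1,…,c_l) is the ciphertext produced by the SEBQ encryption algorithm from M with key (Q,*) and initial vector R, then the SEBQ decryption algorithm applied to C with the parastrophe \ and the same initial vector R outputs exactly M, i.e. D_K(E_K(M)) = M. -/
/-- Column of the SEBQ encryption for one block: `sebqCol mul r m i` is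
`k_{i,j}` where `k_{0,j} = m` and `k_{i,j} = k_{i,j-1} * k_{i-1,j} = r_i * k_{i-1,j}`. -/
def sebqCol {Q : Type*} (mul : Q → Q → Q) {n : ℕ} (r : Fin n → Q) (m : Q) : ℕ → Q
  | 0 => m
  | i + 1 => if h : i < n then mul (r ⟨i, h⟩) (sebqCol mul r m i) else sebqCol mul r m i

/-- Updated chained state after encrypting one block: the column values
`k_{1,j},…,k_{n,j}` with the last one replaced by `k_{1,j} ⊕ ⋯ ⊕ k_{n,j}`. -/
def sebqNext {Q : Type*} [AddCommMonoid Q] (mul : Q → Q → Q) {n : ℕ}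
    (r : Fin n → Q) (m : Q) : Fin n → Q :=
  fun i => if i.val = n - 1 then ∑ j : Fin n, sebqCol mul r m (j.val + 1)
           else sebqCol mul r m (i.val + 1)

/-- SEBQ encryption (Algorithm 1): the ciphertext `C = (c_1,…,c_l)` with
`c_j = k_{n,j}`, chaining the updated state into the next block. -/
def sebqEnc {Q : Type*} [AddCommMonoid Q] (mul : Q → Q → Q) {n : ℕ} :
    (l : ℕ) → (Fin n → Q) → (Fin l → Q) → (Fin l → Q)
  | 0, _, _ => Fin.elim0
  | l + 1, r, M =>
      Fin.cons (sebqCol mul r (M 0) n)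
        (sebqEnc mul l (sebqNext mul r (M 0)) (fun i => M i.succ))

/-- Column of the SEBQ decryption for one block: `sebqDcol ld s c i` is
`k_{i,j}` where `k_{n,j} = c` and `k_{i-1,j} = k_{i,j-1} \ k_{i,j} = s_i \ k_{i,j}`. -/
def sebqDcol {Q : Type*} (ld : Q → Q → Q) {n : ℕ} (s : Fin n → Q) (c : Q) (i : ℕ) : Q :=
  ((List.ofFn s).drop i).foldr (fun rj acc => ld rj acc) c

/-- Updated chained state after decrypting one block. -/
def sebqDNext {Q : Type*} [AddCommMonoid Q] (ld : Q → Q → Q) {n : ℕ}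
    (s : Fin n → Q) (c : Q) : Fin n → Q :=
  fun i => if i.val = n - 1 then ∑ j : Fin n, sebqDcol ld s c (j.val + 1)
           else sebqDcol ld s c (i.val + 1)

/-- SEBQ decryption (Algorithm 2): the plaintext `M = (m_1,…,m_l)` with
`m_j = k_{1,j-1} \ k_{1,j}` (equivalently the bottom value `k_{0,j}` of the chain),
chaining the updated state into the next block. -/
def sebqDec {Q : Type*} [AddCommMonoid Q] (ld : Q → Q → Q) {n : ℕ} :
    (l : ℕ) → (Fin n → Q) → (Fin l → Q) → (Fin l → Q)
  | 0, _, _ => Fin.elim0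
  | l + 1, s, C =>
      Fin.cons (sebqDcol ld s (C 0) 0)
        (sebqDec ld l (sebqDNext ld s (C 0)) (fun i => C i.succ))


section Aux
variable {Q : Type*} (mul ld : Q → Q → Q)

lemma sebqDcol_ge {n : ℕ} (s : Fin n → Q) (c : Q) (i : ℕ) (h : n ≤ i) :
    sebqDcol ld s c i = c := by
  unfold sebqDcol
  rw [List.drop_eq_nil_of_le (by simpa using h)]
  rfl

lemma sebqDcol_lt {n : ℕ} (s : Fin n → Q) (c : Q) (i : ℕ) (h : i < n) :
    sebqDcol ld s c i = ld (s ⟨i, h⟩) (sebqDcol ld s c (i + 1)) := by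
  unfold sebqDcol
  rw [List.drop_eq_getElem_cons (by simpa using h)]
  simp

lemma sebqCol_ge {n : ℕ} (r : Fin n → Q) (m : Q) (i : ℕ) (h : n ≤ i) :
    sebqCol mul r m i = sebqCol mul r m n := by
  have : ∀ j, sebqCol mul r m (n + j) = sebqCol mul r m n := by
    intro j
    induction j with
    | zero => rfl
    | succ j ih => simp [sebqCol, show ¬ (n + j < n) by omega, ih]
  have h2 := this (i - n)
  rwa [show n + (i - n) = i by omega] at h2

lemma sebqDcol_col (hld : ∀ x y z, mul x y = z ↔ y = ld x z)
    {n : ℕ} (r : Fin n → Q) (m : Q) :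
    ∀ i, sebqDcol ld r (sebqCol mul r m n) i = sebqCol mul r m i := by
  have key : ∀ d, sebqDcol ld r (sebqCol mul r m n) (n - d)
      = sebqCol mul r m (n - d) := by
    intro d
    induction d with
    | zero => simpa using sebqDcol_ge ld r _ n le_rfl
    | succ d ih =>
      rcases le_or_gt n d with hd | hd
      · rw [show n - (d + 1) = n - d by omega]; exact ih
      · have hi : n - (d + 1) < n := by omega
        have hi1 : n - (d + 1) + 1 = n - d := by omega
        rw [sebqDcol_lt ld r _ _ hi, hi1, ih]
        have hcol : sebqCol mul r m (n - d)
            = mul (r ⟨n - (d+1), hi⟩) (sebqCol mul r m (n - (d+1))) := by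
          rw [← hi1]; simp [sebqCol, hi]
        rw [hcol]
        exact ((hld _ _ _).mp rfl).symm
  intro i
  rcases le_or_gt n i with h | h
  · rw [sebqDcol_ge ld r _ i h, sebqCol_ge mul r m i h]
  · have := key (n - i)
    rwa [show n - (n - i) = i by omega] at this

lemma sebqDNext_eq [AddCommMonoid Q] (hld : ∀ x y z, mul x y = z ↔ y = ld x z)
    {n : ℕ} (r : Fin n → Q) (m : Q) :
    sebqDNext ld r (sebqCol mul r m n) = sebqNext mul r m := by
  funext i
  unfold sebqDNext sebqNext
  simp only [sebqDcol_col mul ld hld r m]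

end Aux

/-- Correctness of SEBQ: decryption with the parastrophe and the
same initial vector recovers any message: D_K(E_K(M)) = M. -/
theorem sebq_correct (k n l : ℕ)
    (mul ld : (Fin k → ZMod 2) → (Fin k → ZMod 2) → (Fin k → ZMod 2))
    (hq1 : ∀ a b, ∃! x, mul a x = b)
    (hq2 : ∀ a b, ∃! y, mul y a = b)
    (hld : ∀ x y z, mul x y = z ↔ y = ld x z)
    (R : Fin n → (Fin k → ZMod 2)) (M : Fin l → (Fin k → ZMod 2)) :
    sebqDec ld l R (sebqEnc mul l R M) = M := by
  induction l generalizing R with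
  | zero => funext i; exact i.elim0
  | succ l ih =>
    show sebqDec ld (l+1) R (Fin.cons (sebqCol mul R (M 0) n)
        (sebqEnc mul l (sebqNext mul R (M 0)) (fun i => M i.succ))) = M
    unfold sebqDec
    simp only [Fin.cons_zero, Fin.cons_succ]
    rw [sebqDcol_col mul ld hld R (M 0) 0, sebqDNext_eq mul ld hld R (M 0),
      ih (sebqNext mul R (M 0)) (fun i => M i.succ)]
    funext i
    refine Fin.cases ?_ ?_ i
    · rfl
    · intro j; rfl
end

section
/- (Shao–Wei formula.) For every n ≥ 1, the number of Latin squares of order n satisfies L(n) = n! · Σ_{A ∈ B_n} (−1)^{τ₀(A)} · C(perm(A), n), where B_n is the set of all n×n matrices with entries in {0,1} and C(m, n) denotes the binomial coefficient 'm choose n'. -/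
/-- The number of Latin squares of order `n`: functions `L : {1,…,n}² → {1,…,n}`
whose every row and every column is a bijection. -/
noncomputable def latinSquareCount (n : ℕ) : ℕ :=
  Nat.card {L : Fin n → Fin n → Fin n //
    (∀ i, Function.Bijective (L i)) ∧ (∀ j, Function.Bijective fun i => L i j)}

/-- The permanent of a 0-1 matrix `A` (encoded as `Fin n → Fin n → Bool`):
perm(A) = Σ_{τ ∈ S_n} Π_{j} a_{j,τ(j)}. -/
def boolPerm (n : ℕ) (A : Fin n → Fin n → Bool) : ℕ :=
  ∑ τ : Equiv.Perm (Fin n), ∏ j : Fin n, (if A j (τ j) then 1 else 0)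

/-- τ₀(A): the number of zero entries of the 0-1 matrix `A`. -/
def zeroCount (n : ℕ) (A : Fin n → Fin n → Bool) : ℕ :=
  (Finset.univ.filter fun p : Fin n × Fin n => A p.1 p.2 = false).card

open Finset

namespace SW

variable {n : ℕ}

/-- A set of permutations covers every cell `(j, k)`. -/
def covers (n : ℕ) (S : Finset (Equiv.Perm (Fin n))) : Prop :=
  ∀ p : Fin n × Fin n, ∃ τ ∈ S, τ p.1 = p.2

instance : DecidablePred (covers n) := fun _ => by unfold covers; infer_instance

/-- The set of permutations fitting inside the 0-1 matrix `A`. -/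
def fitSet (n : ℕ) (A : Fin n → Fin n → Bool) : Finset (Equiv.Perm (Fin n)) :=
  univ.filter fun τ => ∀ j, A j (τ j) = true

lemma boolPerm_eq (A : Fin n → Fin n → Bool) : boolPerm n A = (fitSet n A).card := by
  unfold boolPerm fitSet
  have h : ∀ τ : Equiv.Perm (Fin n),
      (∏ j : Fin n, (if A j (τ j) then 1 else 0) : ℕ) =
        if (∀ j, A j (τ j) = true) then 1 else 0 := by
    intro τ
    rw [Finset.prod_boole]
    simp
  simp_rw [h]
  rw [Finset.sum_boole]
  simp

lemma choose_eq (A : Fin n → Fin n → Bool) : (boolPerm n A).choose n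
    = (((univ : Finset (Equiv.Perm (Fin n))).powersetCard n).filter
        (fun S => S ⊆ fitSet n A)).card := by
  rw [boolPerm_eq, ← Finset.card_powersetCard]
  congr 1
  ext S
  simp only [Finset.mem_powersetCard, Finset.mem_filter, Finset.subset_univ, true_and]
  tauto

lemma term_eq (S : Finset (Equiv.Perm (Fin n))) (g : Fin n × Fin n → Bool) :
    (-1:ℤ) ^ zeroCount n (fun i j => g (i, j)) *
        (if S ⊆ fitSet n (fun i j => g (i, j)) then (1:ℤ) else 0)
      = ∏ p : Fin n × Fin n,
          ((if g p then (1:ℤ) else -1) *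
            (if ((∃ τ ∈ S, τ p.1 = p.2) → g p = true) then (1:ℤ) else 0)) := by
  rw [Finset.prod_mul_distrib]
  congr 1
  · have hz : zeroCount n (fun i j => g (i, j))
        = (univ.filter fun p : Fin n × Fin n => g p = false).card := by
      unfold zeroCount; congr 1
    rw [hz, Finset.prod_ite]
    simp [Bool.not_eq_true]
  · have hfit : (S ⊆ fitSet n (fun i j => g (i, j))) ↔ (∀ τ ∈ S, ∀ j, g (j, τ j) = true) := by
      simp [fitSet, Finset.subset_iff]
    rw [Finset.prod_boole]
    congr 1
    rw [hfit]
    simp only [eq_iff_iff, mem_univ, true_implies]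
    constructor
    · rintro h p ⟨τ, hτ, hp⟩
      have := h τ hτ p.1
      rwa [hp, Prod.mk.eta] at this
    · intro h τ hτ j
      exact h (j, τ j) ⟨τ, hτ, rfl⟩

lemma inner_sum (S : Finset (Equiv.Perm (Fin n))) :
    (∑ A : Fin n → Fin n → Bool,
        (-1:ℤ) ^ zeroCount n A * (if S ⊆ fitSet n A then (1:ℤ) else 0))
      = if covers n S then 1 else 0 := by
  have hsum := Fintype.sum_equiv (Equiv.curry (Fin n) (Fin n) Bool)
    (fun g : Fin n × Fin n → Bool => ∏ p : Fin n × Fin n,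
      ((if g p then (1:ℤ) else -1) *
        (if ((∃ τ ∈ S, τ p.1 = p.2) → g p = true) then (1:ℤ) else 0)))
    (fun A : Fin n → Fin n → Bool =>
      (-1:ℤ) ^ zeroCount n A * (if S ⊆ fitSet n A then (1:ℤ) else 0))
    (fun g => (term_eq S g).symm)
  rw [← hsum]
  have key := Finset.prod_univ_sum (fun _ : Fin n × Fin n => (univ : Finset Bool))
    (fun p b => (if b then (1:ℤ) else -1) *
      (if ((∃ τ ∈ S, τ p.1 = p.2) → b = true) then (1:ℤ) else 0))
  rw [← Fintype.piFinset_univ, ← key]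
  have h2 : (∏ p : Fin n × Fin n,
      ∑ b : Bool, ((if b then (1:ℤ) else -1) *
        (if ((∃ τ ∈ S, τ p.1 = p.2) → b = true) then (1:ℤ) else 0)))
      = ∏ p : Fin n × Fin n, (if (∃ τ ∈ S, τ p.1 = p.2) then (1:ℤ) else 0) := by
    congr 1
    ext p
    rw [show (univ : Finset Bool) = {true, false} by rfl]
    by_cases hc : ∃ τ ∈ S, τ p.1 = p.2 <;> simp [hc]
  rw [h2, Finset.prod_boole]
  congr 1
  simp only [eq_iff_iff, mem_univ, true_implies]
  rfl

lemma card_onto {β : Type*} [Fintype β] [DecidableEq β] (S : Finset β) (hS : S.card = n) :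
    (univ.filter fun f : Fin n → β => image f univ = S).card = n.factorial := by
  have hcards : Fintype.card (Fin n) = Fintype.card ↥S := by
    simp [Fintype.card_coe, hS]
  have e : {f : Fin n → β // image f univ = S} ≃ (Fin n ≃ ↥S) :=
    { toFun := fun f => Equiv.ofBijective
        (fun i => (⟨f.1 i, by
          have := mem_image_of_mem f.1 (mem_univ i); rwa [f.2] at this⟩ : ↥S))
        (by
          refine (Fintype.bijective_iff_surjective_and_card _).2 ⟨?_, hcards⟩
          rintro ⟨τ, hτ⟩
          rw [← f.2] at hτ
          obtain ⟨i, _, hi⟩ := mem_image.1 hτ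
          exact ⟨i, Subtype.ext hi⟩)
      invFun := fun e => ⟨fun i => (e i : β), by
        ext τ
        simp only [mem_image, mem_univ, true_and]
        constructor
        · rintro ⟨i, rfl⟩; exact (e i).2
        · intro hτ
          obtain ⟨i, hi⟩ := e.surjective ⟨τ, hτ⟩
          exact ⟨i, by rw [hi]⟩⟩
      left_inv := fun f => rfl
      right_inv := fun e => by apply Equiv.ext; intro i; exact Subtype.ext rfl }
  have := Fintype.card_congr e
  rw [Fintype.card_subtype] at this
  rw [this, Fintype.card_equiv (Fintype.equivOfCardEq hcards), Fintype.card_fin]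

lemma latin_count (hn : 1 ≤ n) :
    latinSquareCount n = n.factorial *
      (((univ : Finset (Equiv.Perm (Fin n))).powersetCard n).filter (covers n)).card := by
  classical
  have e1 : {L : Fin n → Fin n → Fin n //
      (∀ i, Function.Bijective (L i)) ∧ (∀ j, Function.Bijective fun i => L i j)}
      ≃ {f : Fin n → Equiv.Perm (Fin n) // ∀ j, Function.Bijective fun i => f i j} :=
    { toFun := fun L => ⟨fun i => Equiv.ofBijective (L.1 i) (L.2.1 i), L.2.2⟩
      invFun := fun f => ⟨fun i j => f.1 i j, ⟨fun i => (f.1 i).bijective, f.2⟩⟩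
      left_inv := fun L => rfl
      right_inv := fun f => by
        apply Subtype.ext; funext i; apply Equiv.ext; intro j; rfl }
  rw [latinSquareCount, Nat.card_congr e1, Nat.card_eq_fintype_card, Fintype.card_subtype]
  set T := ((univ : Finset (Equiv.Perm (Fin n))).powersetCard n).filter (covers n) with hT
  have hmem : ∀ f ∈ univ.filter
      (fun f : Fin n → Equiv.Perm (Fin n) => ∀ j, Function.Bijective fun i => f i j),
      image f univ ∈ T := by
    intro f hf
    rw [mem_filter] at hf
    have hbij := hf.2
    have hinj : Function.Injective f := by
      intro i i' h
      exact (hbij ⟨0, hn⟩).1 (congrArg (fun τ : Equiv.Perm (Fin n) => τ ⟨0, hn⟩) h)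
    rw [hT, mem_filter, mem_powersetCard]
    refine ⟨⟨subset_univ _, ?_⟩, ?_⟩
    · rw [Finset.card_image_of_injective _ hinj, card_univ, Fintype.card_fin]
    · rintro ⟨j, k⟩
      obtain ⟨i, hi⟩ := (hbij j).2 k
      exact ⟨f i, mem_image_of_mem _ (mem_univ i), hi⟩
  rw [Finset.card_eq_sum_card_fiberwise hmem]
  have hfiber : ∀ S ∈ T,
      ((univ.filter (fun f : Fin n → Equiv.Perm (Fin n) =>
          ∀ j, Function.Bijective fun i => f i j)).filter
        (fun f => image f univ = S)).card = n.factorial := by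
    intro S hS
    rw [hT, mem_filter, mem_powersetCard] at hS
    obtain ⟨⟨-, hcard⟩, hcov⟩ := hS
    rw [filter_filter]
    have heq : (univ.filter (fun f : Fin n → Equiv.Perm (Fin n) =>
        (∀ j, Function.Bijective fun i => f i j) ∧ image f univ = S))
        = univ.filter (fun f => image f univ = S) := by
      ext f
      simp only [mem_filter, mem_univ, true_and, and_iff_right_iff_imp]
      intro hf j
      rw [← Finite.surjective_iff_bijective]
      intro k
      obtain ⟨τ, hτS, hτ⟩ := hcov (j, k)
      rw [← hf] at hτS
      obtain ⟨i, -, hi⟩ := mem_image.1 hτS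
      exact ⟨i, by show f i j = k; rw [hi]; exact hτ⟩
    rw [heq, card_onto S hcard]
  rw [Finset.sum_congr rfl hfiber, Finset.sum_const, smul_eq_mul, mul_comm]

end SW

/-- Shao–Wei formula: for every n ≥ 1,
L(n) = n! · Σ_{A ∈ B_n} (−1)^{τ₀(A)} · C(perm(A), n). -/
theorem shao_wei_formula (n : ℕ) (hn : 1 ≤ n) :
    (latinSquareCount n : ℤ) =
      (n.factorial : ℤ) *
        ∑ A : Fin n → Fin n → Bool,
          (-1 : ℤ) ^ zeroCount n A * (Nat.choose (boolPerm n A) n : ℤ) := by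
  classical
  have h1 : ∀ A : Fin n → Fin n → Bool, ((boolPerm n A).choose n : ℤ)
      = ∑ S ∈ ((univ : Finset (Equiv.Perm (Fin n))).powersetCard n),
          (if S ⊆ SW.fitSet n A then (1:ℤ) else 0) := by
    intro A
    rw [SW.choose_eq, Finset.sum_boole]
  have hrhs : (∑ A : Fin n → Fin n → Bool,
        (-1 : ℤ) ^ zeroCount n A * (Nat.choose (boolPerm n A) n : ℤ))
      = ((((univ : Finset (Equiv.Perm (Fin n))).powersetCard n).filter
          (SW.covers n)).card : ℤ) := by
    simp_rw [h1, Finset.mul_sum]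
    rw [Finset.sum_comm]
    simp_rw [SW.inner_sum]
    rw [Finset.sum_boole]
  rw [hrhs, SW.latin_count hn]
  push_cast
  ring
end

section
/- For every n ≥ 1, the number of Latin squares of order n satisfies the upper bound L(n) ≤ Π_{j=1}^{n} (j!)^{n/j}, where the product is over real powers (j!)^{n/j} with real exponent n/j. -/
open Finset

namespace LSQ

variable {n : ℕ}

/-- available columns for row `i`, given priorities `π` (rows with smaller priority processed
earlier) and a full assignment `σ`. -/
def avail (A : Fin n → Finset (Fin n)) (σ : Fin n → Fin n) (π : Equiv.Perm (Fin n))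
    (i : Fin n) : Finset (Fin n) :=
  A i \ (Finset.univ.filter (fun j => π j < π i)).image σ

noncomputable def gp (A : Fin n → Finset (Fin n)) (σ : Fin n → Fin n) (π : Equiv.Perm (Fin n))
    (rem : Finset (Fin n)) : ℝ :=
  ∏ i ∈ rem, ((avail A σ π i).card : ℝ)⁻¹

lemma gp_nonneg (A : Fin n → Finset (Fin n)) (σ : Fin n → Fin n) (π : Equiv.Perm (Fin n))
    (rem : Finset (Fin n)) : 0 ≤ gp A σ π rem := by
  unfold gp; positivity

lemma kraft (A : Fin n → Finset (Fin n)) (π : Equiv.Perm (Fin n)) :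
    ∀ (m : ℕ) (rem : Finset (Fin n)) (S' : Finset (Fin n → Fin n)),
    rem.card = m →
    (∀ σ ∈ S', Function.Injective σ ∧ ∀ i, σ i ∈ A i) →
    (∀ i ∈ rem, ∀ j, π i < π j → j ∈ rem) →
    (∀ σ ∈ S', ∀ τ ∈ S', ∀ j, j ∉ rem → σ j = τ j) →
    ∑ σ ∈ S', gp A σ π rem ≤ 1 := by
  intro m
  induction m with
  | zero =>
    intro rem S' hcard h1 h2 h3
    rw [Finset.card_eq_zero] at hcard
    subst hcard
    have : ∀ σ ∈ S', gp A σ π ∅ = 1 := by intro σ _; simp [gp]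
    rw [Finset.sum_congr rfl this, Finset.sum_const, nsmul_eq_mul, mul_one]
    have hle : S'.card ≤ 1 := Finset.card_le_one.mpr (by
      intro a ha b hb
      funext j
      exact h3 a ha b hb j (by simp))
    exact_mod_cast hle
  | succ m ih =>
    intro rem S' hcard h1 h2 h3
    rcases S'.eq_empty_or_nonempty with rfl | ⟨σ₀, hσ₀⟩
    · simp
    have hne : rem.Nonempty := Finset.card_pos.mp (by omega)
    obtain ⟨i₀, hi₀, hmin⟩ := rem.exists_min_image (fun i => π i) hne
    -- the lower set of i₀ is disjoint from rem
    have hlow : ∀ j : Fin n, π j < π i₀ → j ∉ rem := by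
      intro j hj hjrem
      exact absurd (hmin j hjrem) (not_le.mpr hj)
    -- all σ in S' have the same avail set at i₀
    have havail : ∀ σ ∈ S', avail A σ π i₀ = avail A σ₀ π i₀ := by
      intro σ hσ
      unfold avail
      congr 1
      apply Finset.image_congr
      intro j hj
      simp only [Finset.mem_coe, Finset.mem_filter] at hj
      exact h3 σ hσ σ₀ hσ₀ j (hlow j hj.2)
    set c : ℕ := (avail A σ₀ π i₀).card with hc
    have hcpos : 1 ≤ c := by
      apply Finset.card_pos.mpr
      refine ⟨σ₀ i₀, ?_⟩
      unfold avail
      rw [Finset.mem_sdiff]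
      refine ⟨(h1 σ₀ hσ₀).2 i₀, ?_⟩
      intro hmem
      obtain ⟨j, hj, hje⟩ := Finset.mem_image.mp hmem
      have := (h1 σ₀ hσ₀).1 hje
      subst this
      exact absurd (Finset.mem_filter.mp hj).2 (lt_irrefl _)
    -- split off the factor at i₀
    have hsplit : ∀ σ ∈ S', gp A σ π rem = (c : ℝ)⁻¹ * gp A σ π (rem.erase i₀) := by
      intro σ hσ
      rw [gp, ← Finset.mul_prod_erase _ _ hi₀, havail σ hσ]
      rfl
    rw [Finset.sum_congr rfl hsplit, ← Finset.mul_sum]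
    -- fiberwise
    have hfib : ∑ σ ∈ S', gp A σ π (rem.erase i₀)
        = ∑ v ∈ S'.image (fun σ => σ i₀), ∑ σ ∈ S'.filter (fun σ => σ i₀ = v),
            gp A σ π (rem.erase i₀) := by
      rw [Finset.sum_fiberwise_of_maps_to (fun σ hσ => Finset.mem_image_of_mem _ hσ)]
    rw [hfib]
    have hinner : ∀ v ∈ S'.image (fun σ => σ i₀),
        ∑ σ ∈ S'.filter (fun σ => σ i₀ = v), gp A σ π (rem.erase i₀) ≤ 1 := by
      intro v hv
      apply ih (rem.erase i₀) _ (by rw [Finset.card_erase_of_mem hi₀, hcard]; omega)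
      · intro σ hσ; exact h1 σ (Finset.mem_filter.mp hσ).1
      · intro i hi j hij
        have hi' := Finset.mem_erase.mp hi
        have hjrem : j ∈ rem := h2 i hi'.2 j hij
        refine Finset.mem_erase.mpr ⟨?_, hjrem⟩
        intro hji
        subst hji
        exact absurd (hmin i hi'.2) (not_le.mpr hij)
      · intro σ hσ τ hτ j hj
        have hσ' := Finset.mem_filter.mp hσ
        have hτ' := Finset.mem_filter.mp hτ
        by_cases hji : j = i₀
        · subst hji; rw [hσ'.2, hτ'.2]
        · exact h3 σ hσ'.1 τ hτ'.1 j (by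
            intro hjrem
            exact hj (Finset.mem_erase.mpr ⟨hji, hjrem⟩))
    have himgcard : (S'.image (fun σ => σ i₀)).card ≤ c := by
      apply Finset.card_le_card
      intro v hv
      obtain ⟨σ, hσ, rfl⟩ := Finset.mem_image.mp hv
      rw [← havail σ hσ]
      unfold avail
      rw [Finset.mem_sdiff]
      refine ⟨(h1 σ hσ).2 i₀, ?_⟩
      intro hmem
      obtain ⟨j, hj, hje⟩ := Finset.mem_image.mp hmem
      have := (h1 σ hσ).1 hje
      subst this
      exact absurd (Finset.mem_filter.mp hj).2 (lt_irrefl _)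
    calc (c:ℝ)⁻¹ * ∑ v ∈ S'.image (fun σ => σ i₀), ∑ σ ∈ S'.filter (fun σ => σ i₀ = v),
            gp A σ π (rem.erase i₀)
        ≤ (c:ℝ)⁻¹ * ∑ v ∈ S'.image (fun σ => σ i₀), 1 := by
          apply mul_le_mul_of_nonneg_left _ (by positivity)
          exact Finset.sum_le_sum hinner
      _ = (c:ℝ)⁻¹ * (S'.image (fun σ => σ i₀)).card := by rw [Finset.sum_const, nsmul_eq_mul, mul_one]
      _ ≤ (c:ℝ)⁻¹ * c := by
          apply mul_le_mul_of_nonneg_left _ (by positivity)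
          exact_mod_cast himgcard
      _ ≤ 1 := by
          rw [inv_mul_cancel₀]
          exact Nat.cast_ne_zero.mpr (Nat.one_le_iff_ne_zero.mp hcpos)

end LSQ

namespace LSQ

def Bp (A : Fin n → Finset (Fin n)) (σ : Fin n → Fin n) (π : Equiv.Perm (Fin n)) : ℕ :=
  ∏ i, (avail A σ π i).card

/-- the permutations compatible with the list of allowed sets `A`. -/
def SDR (A : Fin n → Finset (Fin n)) : Finset (Fin n → Fin n) :=
  Finset.univ.filter (fun σ => Function.Injective σ ∧ ∀ i, σ i ∈ A i)

lemma one_le_Bp {A : Fin n → Finset (Fin n)} {σ : Fin n → Fin n} (π : Equiv.Perm (Fin n))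
    (hσ : σ ∈ SDR A) : 1 ≤ Bp A σ π := by
  rw [SDR, Finset.mem_filter] at hσ
  apply Finset.one_le_prod'
  intro i _
  apply Finset.card_pos.mpr
  refine ⟨σ i, ?_⟩
  rw [avail, Finset.mem_sdiff]
  refine ⟨hσ.2.2 i, ?_⟩
  intro hmem
  obtain ⟨j, hj, hje⟩ := Finset.mem_image.mp hmem
  have := hσ.2.1 hje
  subst this
  exact absurd (Finset.mem_filter.mp hj).2 (lt_irrefl _)

lemma gp_eq_inv_Bp (A : Fin n → Finset (Fin n)) (σ : Fin n → Fin n) (π : Equiv.Perm (Fin n)) :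
    gp A σ π Finset.univ = ((Bp A σ π : ℝ))⁻¹ := by
  rw [gp, Bp]
  push_cast
  rw [← Finset.prod_inv_distrib]

lemma perm_bound (A : Fin n → Finset (Fin n)) (π : Equiv.Perm (Fin n)) :
    ((SDR A).card : ℝ) ^ (SDR A).card ≤ ∏ σ ∈ SDR A, (Bp A σ π : ℝ) := by
  set m := (SDR A).card with hm
  rcases Nat.eq_zero_or_pos m with h0 | hpos
  · rw [h0]
    rw [hm, Finset.card_eq_zero] at h0
    simp [h0]
  have hkraft : ∑ σ ∈ SDR A, gp A σ π Finset.univ ≤ 1 := by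
    apply kraft A π (Finset.univ.card) Finset.univ (SDR A) rfl
    · intro σ hσ; exact (Finset.mem_filter.mp hσ).2
    · intro i _ j _; exact Finset.mem_univ j
    · intro σ _ τ _ j hj; exact absurd (Finset.mem_univ j) hj
  have hgm : ∏ σ ∈ SDR A, (gp A σ π Finset.univ) ^ ((m:ℝ)⁻¹) ≤ (m:ℝ)⁻¹ := by
    calc ∏ σ ∈ SDR A, (gp A σ π Finset.univ) ^ ((m:ℝ)⁻¹)
        ≤ ∑ σ ∈ SDR A, (m:ℝ)⁻¹ * gp A σ π Finset.univ := by
          apply Real.geom_mean_le_arith_mean_weighted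
          · intro i _; positivity
          · rw [Finset.sum_const, nsmul_eq_mul, ← hm, mul_inv_cancel₀]
            exact Nat.cast_ne_zero.mpr (Nat.one_le_iff_ne_zero.mp hpos)
          · intro i _; exact gp_nonneg _ _ _ _
      _ = (m:ℝ)⁻¹ * ∑ σ ∈ SDR A, gp A σ π Finset.univ := by rw [Finset.mul_sum]
      _ ≤ (m:ℝ)⁻¹ * 1 := by
          apply mul_le_mul_of_nonneg_left hkraft (by positivity)
      _ = (m:ℝ)⁻¹ := mul_one _
  -- raise to the m-th power
  have hmne : (m:ℝ) ≠ 0 := Nat.cast_ne_zero.mpr (Nat.one_le_iff_ne_zero.mp hpos)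
  have hpow : ∏ σ ∈ SDR A, gp A σ π Finset.univ ≤ ((m:ℝ)⁻¹) ^ m := by
    have h1 : (∏ σ ∈ SDR A, (gp A σ π Finset.univ) ^ ((m:ℝ)⁻¹)) ^ m ≤ ((m:ℝ)⁻¹) ^ m := by
      apply pow_le_pow_left₀ _ hgm
      apply Finset.prod_nonneg
      intro i _
      apply Real.rpow_nonneg (gp_nonneg _ _ _ _)
    rw [← Finset.prod_pow] at h1
    convert h1 using 2 with σ hσ
    rw [← Real.rpow_natCast ((gp A σ π Finset.univ) ^ ((m:ℝ)⁻¹)) m,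
      ← Real.rpow_mul (gp_nonneg _ _ _ _), inv_mul_cancel₀ hmne, Real.rpow_one]
  have hgppos : ∀ σ ∈ SDR A, 0 < gp A σ π Finset.univ := by
    intro σ hσ
    rw [gp_eq_inv_Bp]
    have := one_le_Bp π hσ
    positivity
  have hprodpos : 0 < ∏ σ ∈ SDR A, gp A σ π Finset.univ := Finset.prod_pos hgppos
  have := inv_anti₀ hprodpos hpow
  rw [← inv_pow, inv_inv] at this
  calc ((m:ℝ)) ^ m ≤ (∏ σ ∈ SDR A, gp A σ π Finset.univ)⁻¹ := this
    _ = ∏ σ ∈ SDR A, (gp A σ π Finset.univ)⁻¹ := by rw [← Finset.prod_inv_distrib]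
    _ = ∏ σ ∈ SDR A, (Bp A σ π : ℝ) := by
        apply Finset.prod_congr rfl
        intro σ _
        rw [gp_eq_inv_Bp, inv_inv]

end LSQ

open Finset

namespace LSQ

lemma card_filter_lt_orderEmbOfFin {α : Type*} [LinearOrder α] (s : Finset α) {r : ℕ}
    (h : s.card = r) (k : Fin r) :
    (s.filter (fun x => x < s.orderEmbOfFin h k)).card = (k : ℕ) := by
  have himg : s.filter (fun x => x < s.orderEmbOfFin h k)
      = (Finset.univ.filter (fun j : Fin r => j < k)).image (s.orderEmbOfFin h) := by
    ext x
    simp only [mem_filter, mem_image, mem_univ, true_and]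
    constructor
    · rintro ⟨hxs, hxlt⟩
      refine ⟨(s.orderIsoOfFin h).symm ⟨x, hxs⟩, ?_, ?_⟩
      · rw [← (s.orderEmbOfFin h).lt_iff_lt]
        have : s.orderEmbOfFin h ((s.orderIsoOfFin h).symm ⟨x, hxs⟩) = x := by
          rw [← coe_orderIsoOfFin_apply, OrderIso.apply_symm_apply]
        rw [this]
        exact hxlt
      · rw [← coe_orderIsoOfFin_apply, OrderIso.apply_symm_apply]
    · rintro ⟨j, hj, rfl⟩
      exact ⟨orderEmbOfFin_mem s h j, (s.orderEmbOfFin h).strictMono hj⟩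
  rw [himg, Finset.card_image_of_injective _ (s.orderEmbOfFin h).injective]
  have : Finset.univ.filter (fun j : Fin r => j < k) = Finset.Iio k := by
    ext j; simp
  rw [this, Fin.card_Iio]

lemma orderEmbOfFin_filter_lt_card {α : Type*} [LinearOrder α] (s : Finset α) {r : ℕ}
    (h : s.card = r) {x : α} (hx : x ∈ s) {k : ℕ} (hk : k < r)
    (hcard : (s.filter (fun y => y < x)).card = k) :
    x = s.orderEmbOfFin h ⟨k, hk⟩ := by
  have hvs : s.orderEmbOfFin h ⟨k, hk⟩ ∈ s := orderEmbOfFin_mem s h _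
  have hvcard := card_filter_lt_orderEmbOfFin s h ⟨k, hk⟩
  simp only [Fin.val_mk] at hvcard
  set v := s.orderEmbOfFin h ⟨k, hk⟩ with hv
  rcases lt_trichotomy x v with hlt | heq | hgt
  · exfalso
    have hsub : insert x (s.filter (fun y => y < x)) ⊆ s.filter (fun y => y < v) := by
      intro z hz
      rcases Finset.mem_insert.mp hz with rfl | hz
      · exact Finset.mem_filter.mpr ⟨hx, hlt⟩
      · have hz' := Finset.mem_filter.mp hz
        exact Finset.mem_filter.mpr ⟨hz'.1, hz'.2.trans hlt⟩
    have := Finset.card_le_card hsub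
    rw [Finset.card_insert_of_notMem (by simp), hcard, hvcard] at this
    omega
  · exact heq
  · exfalso
    have hsub : insert v (s.filter (fun y => y < v)) ⊆ s.filter (fun y => y < x) := by
      intro z hz
      rcases Finset.mem_insert.mp hz with rfl | hz
      · exact Finset.mem_filter.mpr ⟨hvs, hgt⟩
      · have hz' := Finset.mem_filter.mp hz
        exact Finset.mem_filter.mpr ⟨hz'.1, hz'.2.trans hgt⟩
    have := Finset.card_le_card hsub
    rw [Finset.card_insert_of_notMem (by simp), hcard, hvcard] at this
    omega

end LSQ

namespace LSQ

variable {n : ℕ}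

/-- number of elements of `T` getting smaller priority than `i` under `π`. -/
def cnt (T : Finset (Fin n)) (i : Fin n) (π : Equiv.Perm (Fin n)) : ℕ :=
  (T.filter (fun j => π j < π i)).card

lemma image_card (T : Finset (Fin n)) {r : ℕ} (hT : T.card = r) (π : Equiv.Perm (Fin n)) :
    (T.image π).card = r := by
  rw [Finset.card_image_of_injective _ π.injective, hT]

/-- the element of `T` with `k`-th smallest priority. -/
noncomputable def jElt (T : Finset (Fin n)) {r : ℕ} (hT : T.card = r) (π : Equiv.Perm (Fin n))
    (k : Fin r) : Fin n :=
  π.symm ((T.image π).orderEmbOfFin (image_card T hT π) k)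

lemma jElt_mem (T : Finset (Fin n)) {r : ℕ} (hT : T.card = r) (π : Equiv.Perm (Fin n))
    (k : Fin r) : jElt T hT π k ∈ T := by
  have := orderEmbOfFin_mem (T.image π) (image_card T hT π) k
  obtain ⟨j, hj, hje⟩ := Finset.mem_image.mp this
  rw [jElt, ← hje, Equiv.symm_apply_apply]
  exact hj

lemma apply_jElt (T : Finset (Fin n)) {r : ℕ} (hT : T.card = r) (π : Equiv.Perm (Fin n))
    (k : Fin r) : π (jElt T hT π k) = (T.image π).orderEmbOfFin (image_card T hT π) k := by
  rw [jElt, Equiv.apply_symm_apply]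

lemma swap_image {T : Finset (Fin n)} {i j : Fin n} (hi : i ∈ T) (hj : j ∈ T) :
    T.image (Equiv.swap i j) = T := by
  have key : ∀ x ∈ T, Equiv.swap i j x ∈ T := by
    intro x hx
    rcases eq_or_ne x i with rfl | hxi
    · rw [Equiv.swap_apply_left]; exact hj
    rcases eq_or_ne x j with rfl | hxj
    · rw [Equiv.swap_apply_right]; exact hi
    · rw [Equiv.swap_apply_of_ne_of_ne hxi hxj]; exact hx
  ext x
  simp only [Finset.mem_image]
  constructor
  · rintro ⟨y, hy, rfl⟩; exact key y hy
  · intro hx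
    refine ⟨Equiv.swap i j x, key x hx, ?_⟩
    simp

/-- the basic swap map on permutations. -/
noncomputable def swapMap (T : Finset (Fin n)) {r : ℕ} (hT : T.card = r) (i : Fin n) (k' : Fin r)
    (π : Equiv.Perm (Fin n)) : Equiv.Perm (Fin n) :=
  π * Equiv.swap i (jElt T hT π k')

lemma swapMap_image (T : Finset (Fin n)) {r : ℕ} (hT : T.card = r) {i : Fin n} (hi : i ∈ T)
    (k' : Fin r) (π : Equiv.Perm (Fin n)) :
    T.image (swapMap T hT i k' π) = T.image π := by
  have : T.image (swapMap T hT i k' π) = (T.image (Equiv.swap i (jElt T hT π k'))).image π := by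
    rw [Finset.image_image]
    rfl
  rw [this, swap_image hi (jElt_mem T hT π k')]

lemma filter_lt_card_eq (T : Finset (Fin n)) (π : Equiv.Perm (Fin n)) (v : Fin n) :
    (T.filter (fun j => π j < v)).card = ((T.image π).filter (fun w => w < v)).card := by
  rw [Finset.filter_image, Finset.card_image_of_injective _ π.injective]

lemma cnt_swapMap (T : Finset (Fin n)) {r : ℕ} (hT : T.card = r) {i : Fin n} (hi : i ∈ T)
    (k' : Fin r) (π : Equiv.Perm (Fin n)) :
    cnt T i (swapMap T hT i k' π) = k' := by
  have happ : swapMap T hT i k' π i = π (jElt T hT π k') := by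
    rw [swapMap, Equiv.Perm.mul_apply, Equiv.swap_apply_left]
  rw [cnt, happ, apply_jElt, filter_lt_card_eq, swapMap_image T hT hi]
  exact card_filter_lt_orderEmbOfFin _ _ _

lemma swapMap_swapMap (T : Finset (Fin n)) {r : ℕ} (hT : T.card = r) {i : Fin n} (hi : i ∈ T)
    (k k' : Fin r) (π : Equiv.Perm (Fin n)) (hπ : cnt T i π = k) :
    swapMap T hT i k (swapMap T hT i k' π) = π := by
  have hrec : jElt T hT (swapMap T hT i k' π) k = jElt T hT π k' := by
    have h1 : ((T.image π).orderEmbOfFin (image_card T hT π) k) = π i := by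
      symm
      apply orderEmbOfFin_filter_lt_card (T.image π) (image_card T hT π)
        (Finset.mem_image_of_mem _ hi) k.isLt
      rw [← filter_lt_card_eq, ← cnt, hπ]
    have h2 : swapMap T hT i k' π (jElt T hT π k') = π i := by
      rw [swapMap, Equiv.Perm.mul_apply, Equiv.swap_apply_right]
    rw [jElt]
    -- rewrite the orderEmbOfFin over the image of swapMap to that over image of π
    have himg := swapMap_image T hT hi k' π
    have haux : ∀ (s₁ s₂ : Finset (Fin n)) (h₁ : s₁.card = r) (h₂ : s₂.card = r), s₁ = s₂ →
        (s₁.orderEmbOfFin h₁ k : Fin n) = s₂.orderEmbOfFin h₂ k := by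
      rintro s₁ s₂ h₁ h₂ rfl; rfl
    rw [haux _ _ (image_card T hT (swapMap T hT i k' π)) (image_card T hT π) himg,
      h1, ← h2, Equiv.symm_apply_apply]
  rw [swapMap, hrec, swapMap, mul_assoc, Equiv.swap_mul_self, mul_one]

lemma cnt_lt (T : Finset (Fin n)) {r : ℕ} (hT : T.card = r) {i : Fin n} (hi : i ∈ T)
    (π : Equiv.Perm (Fin n)) : cnt T i π < r := by
  have hsub : T.filter (fun j => π j < π i) ⊆ T.erase i := by
    intro j hj
    have hj' := Finset.mem_filter.mp hj
    refine Finset.mem_erase.mpr ⟨?_, hj'.1⟩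
    rintro rfl
    exact absurd hj'.2 (lt_irrefl _)
  have h1 := Finset.card_le_card hsub
  rw [Finset.card_erase_of_mem hi, hT] at h1
  have hr : 1 ≤ r := hT ▸ Finset.card_pos.mpr ⟨i, hi⟩
  rw [cnt]
  omega

lemma fiber_card_eq (T : Finset (Fin n)) {r : ℕ} (hT : T.card = r) {i : Fin n} (hi : i ∈ T)
    (k k' : Fin r) :
    (Finset.univ.filter (fun π : Equiv.Perm (Fin n) => cnt T i π = k)).card =
    (Finset.univ.filter (fun π : Equiv.Perm (Fin n) => cnt T i π = k')).card := by
  apply Finset.card_bij' (fun π _ => swapMap T hT i k' π) (fun π _ => swapMap T hT i k π)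
  · intro π hπ
    exact Finset.mem_filter.mpr ⟨Finset.mem_univ _, cnt_swapMap T hT hi k' π⟩
  · intro π hπ
    exact Finset.mem_filter.mpr ⟨Finset.mem_univ _, cnt_swapMap T hT hi k π⟩
  · intro π hπ
    exact swapMap_swapMap T hT hi k k' π (Finset.mem_filter.mp hπ).2
  · intro π hπ
    exact swapMap_swapMap T hT hi k' k π (Finset.mem_filter.mp hπ).2

end LSQ

namespace LSQ

lemma prod_avail (A : Fin n → Finset (Fin n)) {σ : Fin n → Fin n} (hσ : σ ∈ SDR A) (i : Fin n) :
    ∃ N : ℕ, N * (A i).card = Fintype.card (Equiv.Perm (Fin n)) ∧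
      ∏ π : Equiv.Perm (Fin n), (avail A σ π i).card = ((A i).card).factorial ^ N := by
  obtain ⟨-, hinj, hmem⟩ := Finset.mem_filter.mp hσ
  set r := (A i).card with hr'
  set T := Finset.univ.filter (fun j => σ j ∈ A i) with hTdef
  have hsurj : Function.Surjective σ := (Finite.injective_iff_bijective.mp hinj).surjective
  have himage : T.image σ = A i := by
    ext y
    simp only [hTdef, Finset.mem_image, Finset.mem_filter, Finset.mem_univ, true_and]
    constructor
    · rintro ⟨j, hj, rfl⟩; exact hj
    · intro hy
      obtain ⟨j, rfl⟩ := hsurj y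
      exact ⟨j, hy, rfl⟩
  have hT : T.card = r := by
    rw [hr', ← himage, Finset.card_image_of_injective _ hinj]
  have hiT : i ∈ T := Finset.mem_filter.mpr ⟨Finset.mem_univ _, hmem i⟩
  have hr : 0 < r := Finset.card_pos.mpr ⟨σ i, hmem i⟩
  have havail : ∀ π : Equiv.Perm (Fin n), (avail A σ π i).card = r - cnt T i π := by
    intro π
    have hseteq : avail A σ π i = A i \ ((T.filter (fun j => π j < π i)).image σ) := by
      rw [avail]
      ext x
      simp only [Finset.mem_sdiff, Finset.mem_image, Finset.mem_filter, Finset.mem_univ,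
        true_and, hTdef]
      constructor
      · rintro ⟨hxA, hx⟩
        refine ⟨hxA, ?_⟩
        rintro ⟨j, ⟨-, hjlt⟩, hje⟩
        exact hx ⟨j, hjlt, hje⟩
      · rintro ⟨hxA, hx⟩
        refine ⟨hxA, ?_⟩
        rintro ⟨j, hjlt, rfl⟩
        exact hx ⟨j, ⟨hxA, hjlt⟩, rfl⟩
    have hsub : (T.filter (fun j => π j < π i)).image σ ⊆ A i := by
      intro x hx
      obtain ⟨j, hj, rfl⟩ := Finset.mem_image.mp hx
      exact (Finset.mem_filter.mp ((Finset.mem_filter.mp hj).1)).2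
    rw [hseteq, Finset.card_sdiff_of_subset hsub,
      Finset.card_image_of_injective _ hinj]
    rfl
  set N := (Finset.univ.filter (fun π : Equiv.Perm (Fin n) => cnt T i π = 0)).card with hNdef
  have hfib : ∀ k ∈ Finset.range r,
      (Finset.univ.filter (fun π : Equiv.Perm (Fin n) => cnt T i π = k)).card = N := by
    intro k hk
    have := fiber_card_eq T hT hiT ⟨k, Finset.mem_range.mp hk⟩ ⟨0, hr⟩
    simpa using this
  have hsum : Fintype.card (Equiv.Perm (Fin n)) = r * N := by
    rw [← Finset.card_univ,
      Finset.card_eq_sum_card_fiberwise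
        (f := cnt T i) (t := Finset.range r)
        (fun π _ => Finset.mem_range.mpr (cnt_lt T hT hiT π)),
      Finset.sum_congr rfl hfib, Finset.sum_const, Finset.card_range, smul_eq_mul]
  refine ⟨N, by rw [hsum, mul_comm], ?_⟩
  calc ∏ π : Equiv.Perm (Fin n), (avail A σ π i).card
      = ∏ π : Equiv.Perm (Fin n), (r - cnt T i π) := Finset.prod_congr rfl (fun π _ => havail π)
    _ = ∏ k ∈ Finset.range r, ∏ π ∈ Finset.univ.filter (fun π => cnt T i π = k),
          (r - cnt T i π) := by
        rw [Finset.prod_fiberwise_of_maps_to (fun π _ => Finset.mem_range.mpr (cnt_lt T hT hiT π))]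
    _ = ∏ k ∈ Finset.range r, (r - k) ^ N := by
        apply Finset.prod_congr rfl
        intro k hk
        rw [← hfib k hk]
        rw [Finset.prod_congr rfl (fun π hπ => by rw [(Finset.mem_filter.mp hπ).2]),
          Finset.prod_const]
    _ = (∏ k ∈ Finset.range r, (r - k)) ^ N := by rw [Finset.prod_pow]
    _ = (r.factorial) ^ N := by
        congr 1
        calc ∏ k ∈ Finset.range r, (r - k)
            = ∏ k ∈ Finset.range r, (r - 1 - k + 1) := by
              apply Finset.prod_congr rfl
              intro k hk
              have := Finset.mem_range.mp hk
              omega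
          _ = ∏ k ∈ Finset.range r, (k + 1) := Finset.prod_range_reflect (fun j => j + 1) r
          _ = r.factorial := Finset.prod_range_add_one_eq_factorial r

end LSQ

namespace LSQ

theorem bregman (A : Fin n → Finset (Fin n)) :
    ((SDR A).card : ℝ) ≤ ∏ i, (((A i).card).factorial : ℝ) ^ (((A i).card : ℝ)⁻¹) := by
  rcases (SDR A).eq_empty_or_nonempty with h | ⟨σ₀, hσ₀⟩
  · rw [h]
    simp only [Finset.card_empty, Nat.cast_zero]
    apply Finset.prod_nonneg
    intro i _
    positivity
  set m := (SDR A).card with hm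
  have hmpos : 0 < m := Finset.card_pos.mpr ⟨σ₀, hσ₀⟩
  set P := Fintype.card (Equiv.Perm (Fin n)) with hP
  have hPpos : 0 < P := Fintype.card_pos
  have hσ₀mem := (Finset.mem_filter.mp hσ₀).2.2
  have hrpos : ∀ i, 0 < (A i).card := fun i => Finset.card_pos.mpr ⟨σ₀ i, hσ₀mem i⟩
  choose N hN1 hN2 using prod_avail A hσ₀
  have key : ∀ σ ∈ SDR A, ∏ π : Equiv.Perm (Fin n), Bp A σ π
      = ∏ i, ((A i).card).factorial ^ N i := by
    intro σ hσ
    have : ∏ π : Equiv.Perm (Fin n), Bp A σ π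
        = ∏ i, ∏ π : Equiv.Perm (Fin n), (avail A σ π i).card := by
      rw [Finset.prod_comm]
      rfl
    rw [this]
    apply Finset.prod_congr rfl
    intro i _
    obtain ⟨N', h1, h2⟩ := prod_avail A hσ i
    rw [h2]
    congr 1
    exact Nat.eq_of_mul_eq_mul_right (hrpos i) (h1.trans (hN1 i).symm)
  set Q := ∏ i, ((A i).card).factorial ^ N i with hQ
  have step2 : ((m:ℝ)^m)^P ≤ ∏ π : Equiv.Perm (Fin n), ∏ σ ∈ SDR A, (Bp A σ π : ℝ) := by
    calc ((m:ℝ)^m)^P = ∏ _π : Equiv.Perm (Fin n), ((m:ℝ))^m := by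
          rw [Finset.prod_const, Finset.card_univ]
      _ ≤ _ := Finset.prod_le_prod (fun π _ => by positivity) (fun π _ => perm_bound A π)
  have step3 : ∏ π : Equiv.Perm (Fin n), ∏ σ ∈ SDR A, (Bp A σ π : ℝ) = ((Q:ℝ))^m := by
    rw [Finset.prod_comm]
    have hc : ∀ σ ∈ SDR A, ∏ π : Equiv.Perm (Fin n), (Bp A σ π : ℝ) = (Q:ℝ) := by
      intro σ hσ
      rw [← Nat.cast_prod, key σ hσ]
    rw [Finset.prod_congr rfl hc, Finset.prod_const]
  have main : (m:ℝ)^P ≤ (Q:ℝ) := by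
    have h := step2.trans_eq step3
    rw [show ((m:ℝ)^m)^P = ((m:ℝ)^P)^m by rw [← pow_mul, ← pow_mul, mul_comm]] at h
    exact le_of_pow_le_pow_left₀ hmpos.ne' (by positivity) h
  have hfin : (m:ℝ) ≤ (Q:ℝ) ^ ((P:ℝ)⁻¹) := by
    have h1 := Real.rpow_le_rpow (by positivity) main
      (by positivity : (0:ℝ) ≤ ((P:ℝ))⁻¹)
    rwa [← Real.rpow_natCast (m:ℝ) P, ← Real.rpow_mul (by positivity),
      mul_inv_cancel₀ (by exact_mod_cast hPpos.ne'), Real.rpow_one] at h1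
  refine hfin.trans_eq ?_
  rw [hQ]
  push_cast
  rw [← Real.finset_prod_rpow _ _ (fun i _ => by positivity)]
  apply Finset.prod_congr rfl
  intro i _
  rw [← Real.rpow_natCast ((((A i).card).factorial : ℝ)) (N i),
    ← Real.rpow_mul (by positivity)]
  congr 1
  have hcast : (N i : ℝ) * ((A i).card : ℝ) = (P : ℝ) := by exact_mod_cast hN1 i
  have hr0 : ((A i).card : ℝ) ≠ 0 := by exact_mod_cast (hrpos i).ne'
  have hP0 : (P : ℝ) ≠ 0 := by exact_mod_cast hPpos.ne'
  field_simp
  linarith [hcast]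

end LSQ

namespace LSQ

/-- `k × n` Latin rectangles, padded with the identity row below row `k`. -/
def rect (n : ℕ) (k : ℕ) : Finset (Fin n → Fin n → Fin n) :=
  Finset.univ.filter (fun L =>
    (∀ i : Fin n, (i:ℕ) < k → Function.Injective (L i)) ∧
    (∀ j : Fin n, ∀ i i' : Fin n, (i:ℕ) < k → (i':ℕ) < k → L i j = L i' j → i = i') ∧
    (∀ i : Fin n, k ≤ (i:ℕ) → L i = fun j => j))

lemma rect_zero (n : ℕ) : (rect n 0).card = 1 := by
  rw [Finset.card_eq_one]
  refine ⟨fun _ j => j, ?_⟩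
  ext L
  simp only [rect, Finset.mem_filter, Finset.mem_univ, true_and, Finset.mem_singleton]
  constructor
  · rintro ⟨-, -, hpad⟩
    funext i j
    rw [hpad i (Nat.zero_le _)]
  · rintro rfl
    exact ⟨fun i hi => absurd hi (Nat.not_lt_zero _), fun j i i' hi => absurd hi (Nat.not_lt_zero _),
      fun i _ => rfl⟩

lemma card_filter_val_lt (n k : ℕ) (hk : k < n) :
    (Finset.univ.filter (fun i : Fin n => (i:ℕ) < k)).card = k := by
  have : Finset.univ.filter (fun i : Fin n => (i:ℕ) < k) = Finset.Iio (⟨k, hk⟩ : Fin n) := by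
    ext i
    simp [Fin.lt_def]
  rw [this, Fin.card_Iio]

lemma rect_step (n : ℕ) (k : ℕ) (hk : k < n) :
    ((rect n (k+1)).card : ℝ) ≤
      ((rect n k).card : ℝ) * ((((n - k).factorial : ℝ) ^ (((n - k : ℕ) : ℝ))⁻¹) ^ n) := by
  set κ : Fin n := ⟨k, hk⟩ with hκ
  set f : (Fin n → Fin n → Fin n) → (Fin n → Fin n → Fin n) :=
    fun L => Function.update L κ (fun j => j) with hf
  set β : ℝ := (((n - k).factorial : ℝ) ^ (((n - k : ℕ) : ℝ))⁻¹) ^ n with hβ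
  have hβ0 : 0 ≤ β := by positivity
  have hmaps : ∀ L ∈ rect n (k+1), f L ∈ rect n k := by
    intro L hL
    obtain ⟨-, hrow, hcol, hpad⟩ := Finset.mem_filter.mp hL
    refine Finset.mem_filter.mpr ⟨Finset.mem_univ _, ?_, ?_, ?_⟩
    · intro i hi
      have hne : i ≠ κ := by intro h; rw [h] at hi; exact absurd hi (lt_irrefl _)
      simp only [hf, Function.update_of_ne hne]
      exact hrow i (Nat.lt_succ_of_lt hi)
    · intro j i i' hi hi' heq
      have hne : i ≠ κ := by intro h; rw [h] at hi; exact absurd hi (lt_irrefl _)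
      have hne' : i' ≠ κ := by intro h; rw [h] at hi'; exact absurd hi' (lt_irrefl _)
      rw [hf] at heq
      simp only [Function.update_of_ne hne, Function.update_of_ne hne'] at heq
      exact hcol j i i' (Nat.lt_succ_of_lt hi) (Nat.lt_succ_of_lt hi') heq
    · intro i hi
      rcases eq_or_ne i κ with rfl | hne
      · simp only [hf, Function.update_self]
      · have hik : k + 1 ≤ (i:ℕ) := by
          rcases Nat.lt_or_ge (i:ℕ) (k+1) with h | h
          · exfalso
            apply hne
            apply Fin.ext
            show (i:ℕ) = k
            omega
          · exact h
        simp only [hf, Function.update_of_ne hne]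
        exact hpad i (by omega)
  -- fiber bound via Bregman
  have hfiber : ∀ y ∈ (rect n (k+1)).image f,
      (((rect n (k+1)).filter (fun L => f L = y)).card : ℝ) ≤ β := by
    intro y hy
    obtain ⟨L₀, hL₀, rfl⟩ := Finset.mem_image.mp hy
    have hyrect : f L₀ ∈ rect n k := hmaps L₀ hL₀
    set y := f L₀
    obtain ⟨-, hyrow, hycol, hypad⟩ := Finset.mem_filter.mp hyrect
    set A : Fin n → Finset (Fin n) := fun j =>
      Finset.univ \ (Finset.univ.filter (fun i : Fin n => (i:ℕ) < k)).image (fun i => y i j)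
      with hA
    have hAcard : ∀ j, (A j).card = n - k := by
      intro j
      rw [hA]
      rw [Finset.card_sdiff_of_subset (Finset.subset_univ _), Finset.card_univ, Fintype.card_fin]
      congr 1
      rw [Finset.card_image_of_injOn, card_filter_val_lt n k hk]
      intro i hi i' hi' heq
      exact hycol j i i' (Finset.mem_filter.mp hi).2 (Finset.mem_filter.mp hi').2 heq
    -- the fiber injects into SDR A
    have hinj : (((rect n (k+1)).filter (fun L => f L = y)).card : ℕ) ≤ (SDR A).card := by
      apply Finset.card_le_card_of_injOn (fun L => L κ)
      · intro L hL
        obtain ⟨hLrect, hLf⟩ := Finset.mem_filter.mp hL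
        obtain ⟨-, hrow, hcol, -⟩ := Finset.mem_filter.mp hLrect
        refine Finset.mem_filter.mpr ⟨Finset.mem_univ _, hrow κ (Nat.lt_succ_self _), ?_⟩
        intro j
        rw [hA, Finset.mem_sdiff]
        refine ⟨Finset.mem_univ _, ?_⟩
        intro hmem
        obtain ⟨i, hi, hie⟩ := Finset.mem_image.mp hmem
        have hik : (i:ℕ) < k := (Finset.mem_filter.mp hi).2
        have hne : i ≠ κ := by intro h; rw [h] at hik; exact absurd hik (lt_irrefl _)
        have hyi : y i j = L i j := by
          rw [← hLf, hf]
          simp only [Function.update_of_ne hne]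
        rw [hyi] at hie
        have := hcol j i κ (Nat.lt_succ_of_lt hik) (Nat.lt_succ_self _) hie
        exact hne this
      · intro L hL L' hL' heq
        obtain ⟨-, hLf⟩ := Finset.mem_filter.mp hL
        obtain ⟨-, hL'f⟩ := Finset.mem_filter.mp hL'
        funext i j
        rcases eq_or_ne i κ with rfl | hne
        · have heq' : L κ = L' κ := heq
          rw [heq']
        · have h1 : f L i = f L' i := by rw [hLf, hL'f]
          rw [hf] at h1
          simp only [Function.update_of_ne hne] at h1
          rw [h1]
    calc (((rect n (k+1)).filter (fun L => f L = y)).card : ℝ)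
        ≤ ((SDR A).card : ℝ) := by exact_mod_cast hinj
      _ ≤ ∏ j, (((A j).card).factorial : ℝ) ^ (((A j).card : ℝ))⁻¹ := bregman A
      _ = β := by
          rw [hβ]
          calc ∏ j, (((A j).card).factorial : ℝ) ^ (((A j).card : ℝ))⁻¹
              = ∏ _j : Fin n, (((n - k).factorial : ℝ) ^ (((n - k : ℕ) : ℝ))⁻¹) := by
                apply Finset.prod_congr rfl
                intro j _
                rw [hAcard j]
            _ = (((n - k).factorial : ℝ) ^ (((n - k : ℕ) : ℝ))⁻¹) ^ n := by
                rw [Finset.prod_const, Finset.card_univ, Fintype.card_fin]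
  calc ((rect n (k+1)).card : ℝ)
      = ∑ y ∈ (rect n (k+1)).image f, (((rect n (k+1)).filter (fun L => f L = y)).card : ℝ) := by
        rw [← Nat.cast_sum]
        congr 1
        exact Finset.card_eq_sum_card_fiberwise (fun L hL => Finset.mem_image_of_mem f hL)
    _ ≤ ∑ _y ∈ (rect n (k+1)).image f, β := Finset.sum_le_sum hfiber
    _ = ((rect n (k+1)).image f).card * β := by rw [Finset.sum_const, nsmul_eq_mul]
    _ ≤ ((rect n k).card : ℝ) * β := by
        apply mul_le_mul_of_nonneg_right _ hβ0
        have : (rect n (k+1)).image f ⊆ rect n k := by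
          intro y hy
          obtain ⟨L, hL, rfl⟩ := Finset.mem_image.mp hy
          exact hmaps L hL
        exact_mod_cast Finset.card_le_card this

end LSQ

namespace LSQ

lemma rect_top (n : ℕ) : latinSquareCount n = (rect n n).card := by
  rw [latinSquareCount, Nat.card_eq_fintype_card, Fintype.card_subtype]
  congr 1
  ext L
  simp only [rect, Finset.mem_filter, Finset.mem_univ, true_and]
  constructor
  · rintro ⟨hrow, hcol⟩
    refine ⟨fun i _ => (hrow i).injective, fun j i i' _ _ h => (hcol j).injective h,
      fun i hi => absurd i.isLt (by omega)⟩
  · rintro ⟨hrow, hcol, -⟩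
    refine ⟨fun i => Finite.injective_iff_bijective.mp (hrow i i.isLt), fun j => ?_⟩
    apply Finite.injective_iff_bijective.mp
    intro i i' h
    exact hcol j i i' i.isLt i'.isLt h

lemma rect_chain (n : ℕ) : ∀ k, k ≤ n →
    ((rect n k).card : ℝ) ≤
      ∏ m ∈ Finset.range k, (((n - m).factorial : ℝ) ^ (((n - m : ℕ) : ℝ))⁻¹) ^ n := by
  intro k
  induction k with
  | zero => intro _; simp [rect_zero]
  | succ k ih =>
    intro hk
    have hk' : k < n := hk
    calc ((rect n (k+1)).card : ℝ)
        ≤ ((rect n k).card : ℝ) * ((((n - k).factorial : ℝ) ^ (((n - k : ℕ) : ℝ))⁻¹) ^ n) :=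
          rect_step n k hk'
      _ ≤ (∏ m ∈ Finset.range k, (((n - m).factorial : ℝ) ^ (((n - m : ℕ) : ℝ))⁻¹) ^ n) *
            ((((n - k).factorial : ℝ) ^ (((n - k : ℕ) : ℝ))⁻¹) ^ n) := by
          apply mul_le_mul_of_nonneg_right (ih (le_of_lt hk')) (by positivity)
      _ = ∏ m ∈ Finset.range (k+1), (((n - m).factorial : ℝ) ^ (((n - m : ℕ) : ℝ))⁻¹) ^ n := by
          rw [Finset.prod_range_succ]

end LSQ


/-- for every n ≥ 1, L(n) ≤ Π_{j=1}^{n} (j!)^{n/j}, where the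
powers are real powers with real exponent n/j. -/
theorem latin_square_count_upper_bound (n : ℕ) (hn : 1 ≤ n) :
    (latinSquareCount n : ℝ) ≤
      ∏ j ∈ Finset.Icc 1 n, (j.factorial : ℝ) ^ ((n : ℝ) / (j : ℝ)) := by
  have h1 := LSQ.rect_chain n n le_rfl
  rw [← LSQ.rect_top n] at h1
  refine h1.trans_eq ?_
  apply Finset.prod_bij' (fun m _ => n - m) (fun j _ => n - j)
  · intro m hm
    have := Finset.mem_range.mp hm
    rw [Finset.mem_Icc]
    omega
  · intro j hj
    have := Finset.mem_Icc.mp hj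
    rw [Finset.mem_range]
    omega
  · intro m hm
    have := Finset.mem_range.mp hm
    omega
  · intro j hj
    have := Finset.mem_Icc.mp hj
    omega
  · intro m hm
    have hm' := Finset.mem_range.mp hm
    have hpos : 0 < n - m := by omega
    rw [← Real.rpow_natCast ((((n - m).factorial : ℝ)) ^ (((n - m : ℕ) : ℝ))⁻¹) n,
      ← Real.rpow_mul (by positivity)]
    congr 1
    rw [inv_mul_eq_div]
end
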